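/- arXiv:0803.2848 — 3 statements merged into one kernel-verified Lean document; each statement's English description precedes it below -/
import Mathlib

section
/- Let Z := 2·∑_{x=0}^∞ ∏_{z=1}^{x} w(−z)/w(z) and ρ(x) := Z⁻¹·∏_{z=1}^{⌊|2x+1|/2⌋} w(−z)/w(z) for x ∈ ℤ. Then Z < ∞, ρ is a probability distribution on ℤ (∑_{x∈ℤ} ρ(x) = 1), and ρ is the unique stationary distribution of the Markov kernel P, i.e. ∑_{x∈ℤ} ρ(x)·P(x,y) = ρ(y) for all y ∈ ℤ, and any probability distribution π on ℤ with ∑_x π(x)P(x,y) = π(y) for all y equals ρ. -/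
open MeasureTheory Filter
open scoped BigOperators ENNReal

noncomputable section

/-- `p(x) = w(-x)/(w(x)+w(-x))`. -/
def pfun (w : ℤ → ℝ) (x : ℤ) : ℝ := w (-x) / (w x + w (-x))

/-- `q(x) = w(x)/(w(x)+w(-x))`. -/
def qfun (w : ℤ → ℝ) (x : ℤ) : ℝ := w x / (w x + w (-x))

/-- The Markov transition kernel `P(x,y)`. -/
def Pker (w : ℤ → ℝ) (x y : ℤ) : ℝ :=
  if x - 1 ≤ y then (∏ z ∈ Finset.Icc x y, pfun w z) * qfun w (y + 1) else 0

/-- The `m`-step transition kernel. -/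
def Pm (w : ℤ → ℝ) : ℕ → ℤ → ℤ → ℝ
  | 0, x, y => if x = y then 1 else 0
  | m + 1, x, y => ∑' z : ℤ, Pm w m x z * Pker w z y

/-- The normalizing constant `Z`. -/
def Zconst (w : ℤ → ℝ) : ℝ :=
  2 * ∑' x : ℕ, ∏ z ∈ Finset.Icc (1 : ℤ) (x : ℤ), w (-z) / w z

/-- The stationary distribution `ρ`. -/
def rho (w : ℤ → ℝ) (x : ℤ) : ℝ :=
  (Zconst w)⁻¹ * ∏ z ∈ Finset.Icc (1 : ℤ) (|2 * x + 1| / 2), w (-z) / w z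

/-- The weight function `w` is positive, nondecreasing and satisfies
`lim_{z→∞} (w(z) - w(-z)) > 0`. -/
def GoodWeight (w : ℤ → ℝ) : Prop :=
  (∀ z, 0 < w z) ∧ (∀ z, w z ≤ w (z + 1)) ∧
    ∃ c > (0 : ℝ), ∀ᶠ z : ℤ in atTop, c ≤ w z - w (-z)

/-- `η` is a Markov chain with (sub)stochastic kernel `K` started at `a`,
characterized through its cylinder probabilities. -/
def KChain {Ω : Type*} [MeasurableSpace Ω] (μ : Measure Ω)
    (K : ℤ → ℤ → ℝ) (η : ℕ → Ω → ℤ) (a : ℤ) : Prop :=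
  (∀ n, Measurable (η n)) ∧
  ∀ (n : ℕ) (x : ℕ → ℤ),
    μ {ω | ∀ i ≤ n, η i ω = x i} =
      ENNReal.ofReal ((if x 0 = a then (1 : ℝ) else 0) *
        ∏ i ∈ Finset.range n, K (x i) (x (i + 1)))

/-!
The kernel moves from `x` one step down with probability `q(x)`, or climbs through
`x, x+1, …`, passing each level `z` with probability `p(z)`. With `r(x) := w(-x)/w(x) = p(x)/q(x)`,
a probability distribution `π` is stationary exactly when it satisfies the balance relation
`π(x+1) = r(x+1) π(x)`.

Given the balance relation, `π(x) = p(x) (π(x-1) + π(x))`, so the series `∑ₓ π(x) P(x,y)`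
telescopes to `q(y+1) (π(y) + π(y+1)) = π(y)`. Conversely, the one-step identity
`P(x,y) = [x = y+1] q(y+1) + r(y) q(y+1) P(x,y-1)` turns stationarity into the statement that
`π(y+1) - r(y+1) π(y)` does not depend on `y`; this defect tends to `0` at `+∞` because `r ≤ 1`
on `ℕ` (monotonicity of `w`), so it vanishes.

The balance relation determines `π` up to a factor, and `ρ` satisfies it. Finally
`∑ ∏_{z=1}^x r(z)` converges by the ratio test, since `r` is antitone and `r(z₀) < 1` for some `z₀`.
-/

open Filter Topology

def weightRatio (w : ℤ → ℝ) (x : ℤ) : ℝ := w (-x) / w x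

def ratioProd (w : ℤ → ℝ) (x : ℤ) : ℝ := ∏ z ∈ Finset.Icc 1 x, weightRatio w z

def IsBalanced (w π : ℤ → ℝ) : Prop := ∀ x, π (x + 1) = weightRatio w (x + 1) * π x

lemma hasSum_sub_succ_of_nonneg {u : ℕ → ℝ} (hu : ∀ n, 0 ≤ u n - u (n + 1))
    (h : Tendsto u atTop (𝓝 0)) : HasSum (fun n => u n - u (n + 1)) (u 0) := by
  rw [hasSum_iff_tendsto_nat_of_nonneg hu]
  simp_rw [Finset.sum_range_sub']
  simpa using (tendsto_const_nhds (x := u 0)).sub h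

lemma eq_of_eq_sub_one_of_tendsto {α : Type*} [TopologicalSpace α] [T2Space α] {C : ℤ → α}
    {a : α} (hC : ∀ y, C y = C (y - 1)) (h : Tendsto C atTop (𝓝 a)) (y : ℤ) : C y = a := by
  have hconst : ∀ y, C y = C 0 := by
    intro y
    induction y using Int.induction_on with
    | zero => rfl
    | succ k ih => rw [hC, add_sub_cancel_right, ih]
    | pred k ih => rw [← ih, hC (-k)]
  rw [hconst y]
  exact tendsto_nhds_unique (tendsto_const_nhds.congr fun y => (hconst y).symm) h

lemma Summable.tendsto_sub_natCast {π : ℤ → ℝ} (hπ : Summable π) (a : ℤ) :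
    Tendsto (fun n : ℕ => π (a - n)) atTop (𝓝 0) :=
  (hπ.comp_injective fun m n h => by simpa using h).tendsto_atTop_zero

lemma prod_Icc_add_one_sub_natCast_succ {M : Type*} [CommMonoid M] (f : ℤ → M) (y : ℤ) (n : ℕ) :
    ∏ z ∈ Finset.Icc (y + 1 - (n + 1 : ℕ)) y, f z
      = f (y - n) * ∏ z ∈ Finset.Icc (y + 1 - n) y, f z := by
  rw [show y + 1 - ((n + 1 : ℕ) : ℤ) = y - n by push_cast; ring,
    ← Finset.insert_Icc_add_one_left_eq_Icc (by omega : y - n ≤ y), Finset.prod_insert (by simp),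
    show y - n + 1 = y + 1 - n by ring]

variable {w : ℤ → ℝ}

lemma GoodWeight.pos (hw : GoodWeight w) : ∀ x, 0 < w x := hw.1

lemma GoodWeight.monotone (hw : GoodWeight w) : Monotone w := monotone_int_of_le_succ hw.2.1

lemma GoodWeight.exists_neg_lt (hw : GoodWeight w) : ∃ z, w (-z) < w z := by
  obtain ⟨c, hc, hev⟩ := hw.2.2
  obtain ⟨z, hz⟩ := hev.exists
  exact ⟨z, by linarith⟩

section Positive

variable (hpos : ∀ x, 0 < w x)
include hpos

lemma pfun_add_qfun (x : ℤ) : pfun w x + qfun w x = 1 := by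
  rw [pfun, qfun, ← add_div, add_comm, div_self (add_pos (hpos x) (hpos (-x))).ne']

lemma pfun_eq_weightRatio_mul_qfun (x : ℤ) : pfun w x = weightRatio w x * qfun w x := by
  rw [pfun, qfun, weightRatio, div_mul_div_cancel₀ (hpos x).ne']

lemma qfun_pos (x : ℤ) : 0 < qfun w x := div_pos (hpos x) (add_pos (hpos x) (hpos (-x)))

lemma pfun_nonneg (x : ℤ) : 0 ≤ pfun w x :=
  (div_pos (hpos (-x)) (add_pos (hpos x) (hpos (-x)))).le

lemma pfun_le_one (x : ℤ) : pfun w x ≤ 1 := by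
  linarith [pfun_add_qfun hpos x, qfun_pos hpos x]

lemma qfun_le_one (x : ℤ) : qfun w x ≤ 1 := by
  linarith [pfun_add_qfun hpos x, pfun_nonneg hpos x]

lemma qfun_mul_one_add_weightRatio (x : ℤ) : qfun w x * (1 + weightRatio w x) = 1 := by
  rw [mul_one_add, mul_comm (qfun w x), ← pfun_eq_weightRatio_mul_qfun hpos, add_comm,
    pfun_add_qfun hpos]

lemma weightRatio_pos (x : ℤ) : 0 < weightRatio w x := div_pos (hpos (-x)) (hpos x)

lemma weightRatio_zero : weightRatio w 0 = 1 := by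
  rw [weightRatio, neg_zero, div_self (hpos 0).ne']

lemma weightRatio_mul_weightRatio_neg (x : ℤ) : weightRatio w x * weightRatio w (-x) = 1 := by
  rw [weightRatio, weightRatio, neg_neg, div_mul_div_cancel₀ (hpos x).ne',
    div_self (hpos _).ne']

lemma weightRatio_antitone (hmono : Monotone w) : Antitone (weightRatio w) := fun _ _ hab =>
  div_le_div₀ (hpos _).le (hmono (neg_le_neg hab)) (hpos _) (hmono hab)

lemma weightRatio_le_one (hmono : Monotone w) {x : ℤ} (hx : 0 ≤ x) : weightRatio w x ≤ 1 :=
  weightRatio_zero hpos ▸ weightRatio_antitone hpos hmono hx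

lemma prod_pfun_nonneg (s : Finset ℤ) : 0 ≤ ∏ z ∈ s, pfun w z :=
  Finset.prod_nonneg fun z _ => pfun_nonneg hpos z

lemma prod_pfun_le_one (s : Finset ℤ) : ∏ z ∈ s, pfun w z ≤ 1 :=
  Finset.prod_le_one (fun z _ => pfun_nonneg hpos z) fun z _ => pfun_le_one hpos z

lemma ratioProd_pos (x : ℤ) : 0 < ratioProd w x :=
  Finset.prod_pos fun z _ => weightRatio_pos hpos z

end Positive

lemma ratioProd_add_one {x : ℤ} (hx : 0 ≤ x) :
    ratioProd w (x + 1) = ratioProd w x * weightRatio w (x + 1) := by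
  rw [ratioProd, ratioProd,
    ← Finset.insert_Icc_right_eq_Icc_add_one (by omega : (1 : ℤ) ≤ x + 1),
    Finset.prod_insert (by simp), mul_comm]

lemma summable_ratioProd (hw : GoodWeight w) : Summable (fun n : ℕ => ratioProd w n) := by
  obtain ⟨z₀, hz₀⟩ := hw.exists_neg_lt
  refine summable_of_ratio_norm_eventually_le ((div_lt_one (hw.pos z₀)).mpr hz₀) ?_
  filter_upwards [eventually_ge_atTop z₀.toNat] with n hn
  rw [Nat.cast_succ, ratioProd_add_one n.cast_nonneg, norm_mul, mul_comm, Real.norm_eq_abs,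
    abs_of_pos (weightRatio_pos hw.pos _)]
  exact mul_le_mul_of_nonneg_right (weightRatio_antitone hw.pos hw.monotone (by omega))
    (norm_nonneg _)

lemma Zconst_pos (hw : GoodWeight w) : 0 < Zconst w :=
  mul_pos two_pos <| (summable_ratioProd hw).tsum_pos (fun n => (ratioProd_pos hw.pos n).le) 0
    (ratioProd_pos hw.pos 0)

lemma rho_of_nonneg {x : ℤ} (hx : 0 ≤ x) : rho w x = (Zconst w)⁻¹ * ratioProd w x := by
  rw [rho, abs_of_nonneg (by omega), show (2 * x + 1) / 2 = x by omega]
  rfl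

lemma rho_neg_sub_one (x : ℤ) : rho w (-x - 1) = rho w x := by
  rw [rho, rho, show 2 * (-x - 1) + 1 = -(2 * x + 1) by ring, abs_neg]

lemma rho_zero_ne_zero (hw : GoodWeight w) : rho w 0 ≠ 0 := by
  rw [rho_of_nonneg le_rfl]
  exact mul_ne_zero (inv_ne_zero (Zconst_pos hw).ne') (ratioProd_pos hw.pos 0).ne'

lemma rho_nonneg (hw : GoodWeight w) (x : ℤ) : 0 ≤ rho w x :=
  mul_nonneg (inv_nonneg.mpr (Zconst_pos hw).le) (ratioProd_pos hw.pos _).le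

lemma hasSum_rho (hw : GoodWeight w) : HasSum (rho w) 1 := by
  have h := (summable_ratioProd hw).hasSum.mul_left (Zconst w)⁻¹
  have hnat : HasSum (fun n : ℕ => rho w n) _ :=
    h.congr_fun fun n => rho_of_nonneg n.cast_nonneg
  have hneg : HasSum (fun n : ℕ => rho w (-(n + 1))) _ := hnat.congr_fun fun n => by
    rw [neg_add', rho_neg_sub_one]
  convert hnat.of_nat_of_neg_add_one hneg
  rw [← mul_add, ← two_mul]
  exact (inv_mul_cancel₀ (Zconst_pos hw).ne').symm

lemma rho_isBalanced (hw : GoodWeight w) : IsBalanced w (rho w) := by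
  have hnonneg : ∀ x, 0 ≤ x → rho w (x + 1) = weightRatio w (x + 1) * rho w x := fun x hx => by
    rw [rho_of_nonneg (by omega), rho_of_nonneg hx, ratioProd_add_one hx]
    ring
  intro x
  rcases le_or_gt 0 x with hx | hx
  · exact hnonneg x hx
  obtain rfl | hx := (show x ≤ -1 by omega).eq_or_lt
  · have h := rho_neg_sub_one (w := w) 0
    norm_num at h
    norm_num [h, weightRatio_zero hw.pos]
  · -- reflect through `x ↦ -x - 1`, which maps the step `x → x + 1` to `-x - 2 → -x - 1`
    have h := hnonneg (-x - 2) (by omega)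
    have e1 := rho_neg_sub_one (w := w) (-x - 2)
    have e2 := rho_neg_sub_one (w := w) (-x - 1)
    have hr := weightRatio_mul_weightRatio_neg hw.pos (x + 1)
    rw [show -x - 2 + 1 = -x - 1 by ring] at h
    rw [show -(-x - 2) - 1 = x + 1 by ring] at e1
    rw [show -(-x - 1) - 1 = x by ring] at e2
    rw [show -(x + 1) = -x - 1 by ring] at hr
    rw [e1, e2, h]
    linear_combination (-rho w (-x - 2)) * hr

section Kernel

lemma Pker_of_lt {x y : ℤ} (h : y + 1 < x) : Pker w x y = 0 := if_neg (by omega)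

lemma hasSum_mul_Pker_iff (f : ℤ → ℝ) (y : ℤ) (s : ℝ) :
    HasSum (fun x => f x * Pker w x y) s ↔ HasSum (fun n : ℕ =>
      f (y + 1 - n) * ((∏ z ∈ Finset.Icc (y + 1 - n) y, pfun w z) * qfun w (y + 1))) s := by
  have hinj : Function.Injective (fun n : ℕ => y + 1 - (n : ℤ)) := fun m n h => by
    simpa using h
  have hsupp : ∀ x ∉ Set.range (fun n : ℕ => y + 1 - (n : ℤ)), f x * Pker w x y = 0 := by
    intro x hx
    rw [Pker_of_lt, mul_zero]
    by_contra h
    exact hx ⟨(y + 1 - x).toNat, by simp only; omega⟩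
  have hP : ∀ n : ℕ, Pker w (y + 1 - n) y
      = (∏ z ∈ Finset.Icc (y + 1 - n) y, pfun w z) * qfun w (y + 1) := fun n =>
    if_pos (by omega)
  rw [← hinj.hasSum_iff hsupp]
  simp only [Function.comp_def, hP]

variable (hpos : ∀ x, 0 < w x)
include hpos

lemma Pker_nonneg (x y : ℤ) : 0 ≤ Pker w x y := by
  unfold Pker
  split_ifs
  · exact mul_nonneg (prod_pfun_nonneg hpos _) (qfun_pos hpos _).le
  · exact le_rfl

lemma Pker_le_one (x y : ℤ) : Pker w x y ≤ 1 := by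
  unfold Pker
  split_ifs
  · exact mul_le_one₀ (prod_pfun_le_one hpos _) (qfun_pos hpos _).le (qfun_le_one hpos _)
  · exact zero_le_one

lemma Pker_eq_ite_add (x y : ℤ) :
    Pker w x y = (if x = y + 1 then qfun w (y + 1) else 0)
      + weightRatio w y * qfun w (y + 1) * Pker w x (y - 1) := by
  rcases lt_trichotomy x (y + 1) with h | rfl | h
  · rw [if_neg h.ne, Pker, Pker, if_pos (by omega), if_pos (by omega), sub_add_cancel,
      ← Finset.insert_Icc_sub_one_right_eq_Icc (by omega : x ≤ y), Finset.prod_insert (by simp),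
      pfun_eq_weightRatio_mul_qfun hpos]
    ring
  · simp [Pker]
  · rw [if_neg h.ne', Pker_of_lt h, Pker_of_lt (by omega)]
    ring

lemma IsBalanced.eq_pfun_mul {π : ℤ → ℝ} (hb : IsBalanced w π) (x : ℤ) :
    π x = pfun w x * (π (x - 1) + π x) := by
  have h := hb (x - 1)
  rw [sub_add_cancel] at h
  linear_combination qfun w x * h - π (x - 1) * pfun_eq_weightRatio_mul_qfun hpos x
    - π x * pfun_add_qfun hpos x

variable {π : ℤ → ℝ} (hπ0 : ∀ x, 0 ≤ π x) (hπ : Summable π)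
include hπ0 hπ

lemma summable_mul_Pker (y : ℤ) : Summable (fun x => π x * Pker w x y) :=
  hπ.of_nonneg_of_le (fun x => mul_nonneg (hπ0 x) (Pker_nonneg hpos x y))
    fun x => mul_le_of_le_one_right (hπ0 x) (Pker_le_one hpos x y)

lemma tsum_mul_Pker_eq (y : ℤ) :
    ∑' x, π x * Pker w x y
      = π (y + 1) * qfun w (y + 1)
        + weightRatio w y * qfun w (y + 1) * ∑' x, π x * Pker w x (y - 1) := by
  have h1 : HasSum (fun x => π x * if x = y + 1 then qfun w (y + 1) else 0)
      (π (y + 1) * qfun w (y + 1)) := by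
    convert hasSum_ite_eq (y + 1) (π (y + 1) * qfun w (y + 1)) using 2 with x
    split_ifs with hx <;> simp [hx]
  have h2 := (summable_mul_Pker hpos hπ0 hπ (y - 1)).hasSum.mul_left
    (weightRatio w y * qfun w (y + 1))
  refine ((h1.add h2).congr_fun fun x => ?_).tsum_eq
  rw [Pker_eq_ite_add hpos x y]
  ring

lemma IsBalanced.hasSum_mul_Pker (hb : IsBalanced w π) (y : ℤ) :
    HasSum (fun x => π x * Pker w x y) (π y) := by
  set escape : ℕ → ℝ := fun n => ∏ z ∈ Finset.Icc (y + 1 - n) y, pfun w z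
  set u : ℕ → ℝ := fun n => (π (y - n) + π (y + 1 - n)) * escape n
  have hterm : ∀ n, u n - u (n + 1) = π (y + 1 - n) * escape n := by
    intro n
    have h := hb.eq_pfun_mul hpos (y - n)
    simp only [u, escape, prod_Icc_add_one_sub_natCast_succ]
    rw [show y - ((n + 1 : ℕ) : ℤ) = y - n - 1 by push_cast; ring,
      show y + 1 - ((n + 1 : ℕ) : ℤ) = y - n by push_cast; ring]
    linear_combination (∏ z ∈ Finset.Icc (y + 1 - n) y, pfun w z) * h
  have hlim : Tendsto u atTop (𝓝 0) := by
    refine squeeze_zero (fun n => mul_nonneg (add_nonneg (hπ0 _) (hπ0 _))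
      (prod_pfun_nonneg hpos _)) (fun n => mul_le_of_le_one_right (add_nonneg (hπ0 _) (hπ0 _))
      (prod_pfun_le_one hpos _)) ?_
    simpa using (hπ.tendsto_sub_natCast y).add (hπ.tendsto_sub_natCast (y + 1))
  have hsum := (hasSum_sub_succ_of_nonneg (fun n => hterm n ▸ mul_nonneg (hπ0 _)
    (prod_pfun_nonneg hpos _)) hlim).mul_right (qfun w (y + 1))
  have hu0 : u 0 * qfun w (y + 1) = π y := by
    simp only [u, escape, Nat.cast_zero, sub_zero, Finset.Icc_eq_empty (lt_add_one y).not_ge,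
      Finset.prod_empty, mul_one, hb y]
    linear_combination π y * qfun_mul_one_add_weightRatio hpos (y + 1)
  rw [hasSum_mul_Pker_iff, ← hu0]
  refine hsum.congr_fun fun n => ?_
  rw [hterm]
  ring

variable (hmono : Monotone w)
include hmono

lemma isBalanced_of_stationary (hstat : ∀ y, ∑' x, π x * Pker w x y = π y) :
    IsBalanced w π := by
  set C : ℤ → ℝ := fun y => π (y + 1) - weightRatio w (y + 1) * π y
  have hstep : ∀ y, C y = C (y - 1) := by
    intro y
    have h := tsum_mul_Pker_eq hpos hπ0 hπ y
    rw [hstat, hstat] at h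
    simp only [C, sub_add_cancel]
    linear_combination -(1 + weightRatio w (y + 1)) * h
      - (π (y + 1) + weightRatio w y * π (y - 1)) * qfun_mul_one_add_weightRatio hpos (y + 1)
  have hπlim : Tendsto π atTop (𝓝 0) :=
    hπ.tendsto_cofinite_zero.mono_left (Int.cofinite_eq ▸ le_sup_right)
  have hrπ : Tendsto (fun y => weightRatio w (y + 1) * π y) atTop (𝓝 0) := by
    refine squeeze_zero_norm' ?_ hπlim
    filter_upwards [eventually_ge_atTop 0] with y hy
    rw [Real.norm_eq_abs, abs_of_nonneg (mul_nonneg (weightRatio_pos hpos _).le (hπ0 y))]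
    exact mul_le_of_le_one_left (hπ0 y) (weightRatio_le_one hpos hmono (by omega))
  have hC : Tendsto C atTop (𝓝 0) := by
    simpa using (hπlim.comp (tendsto_atTop_add_const_right _ 1 tendsto_id)).sub hrπ
  exact fun x => sub_eq_zero.mp (eq_of_eq_sub_one_of_tendsto hstep hC x)

end Kernel

section Balanced

variable (hpos : ∀ x, 0 < w x) {π σ : ℤ → ℝ}
include hpos

lemma IsBalanced.mul_eq_mul (hπ : IsBalanced w π) (hσ : IsBalanced w σ) (x : ℤ) :
    π x * σ 0 = π 0 * σ x := by
  induction x using Int.induction_on with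
  | zero => ring
  | succ k ih =>
    rw [hπ, hσ, mul_assoc, ih]
    ring
  | pred k ih =>
    apply mul_left_cancel₀ (weightRatio_pos hpos (-k)).ne'
    have h1 := hπ (-k - 1)
    have h2 := hσ (-k - 1)
    rw [sub_add_cancel] at h1 h2
    linear_combination ih - σ 0 * h1 + π 0 * h2

lemma IsBalanced.eq_of_hasSum_one (hπ : IsBalanced w π) (hσ : IsBalanced w σ) (hσ0 : σ 0 ≠ 0)
    (hπ1 : HasSum π 1) (hσ1 : HasSum σ 1) : π = σ := by
  have hprop := hπ.mul_eq_mul hpos hσ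
  have h := hπ1.mul_right (σ 0)
  rw [funext hprop] at h
  have h0 : σ 0 = π 0 := by simpa using h.unique (hσ1.mul_left (π 0))
  funext x
  apply mul_left_cancel₀ hσ0
  linear_combination hprop x - σ x * h0

end Balanced

/-- `Z < ∞`, `ρ` is a probability distribution on `ℤ`, it is stationary
for the kernel `P`, and it is the unique stationary probability distribution. -/
theorem stmt_1 (w : ℤ → ℝ) (hw : GoodWeight w) :
    Summable (fun x : ℕ => ∏ z ∈ Finset.Icc (1 : ℤ) (x : ℤ), w (-z) / w z) ∧
    HasSum (rho w) 1 ∧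
    (∀ y : ℤ, ∑' x : ℤ, rho w x * Pker w x y = rho w y) ∧
    (∀ π : ℤ → ℝ, (∀ x, 0 ≤ π x) → HasSum π 1 →
      (∀ y : ℤ, ∑' x : ℤ, π x * Pker w x y = π y) → π = rho w) := by
  have hρ := rho_isBalanced hw
  have hρ1 := hasSum_rho hw
  refine ⟨summable_ratioProd hw, hρ1, fun y => ?_, fun π hπ0 hπ1 hstat => ?_⟩
  · exact (hρ.hasSum_mul_Pker hw.pos (rho_nonneg hw) hρ1.summable y).tsum_eq
  · have hπ := isBalanced_of_stationary hw.pos hπ0 hπ1.summable hw.monotone hstat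
    exact hπ.eq_of_hasSum_one hw.pos hρ (rho_zero_ne_zero hw) hπ1 hρ1
end
end

section
/- For every weight function w satisfying the growth condition, the stationary distribution ρ has mean −1/2: ∑_{x∈ℤ} x·ρ(x) = −1/2. -/
open MeasureTheory Filter
open scoped BigOperators ENNReal

noncomputable section

/-!
Since `⌊|2x+1|/2⌋` is invariant under `x ↦ -x-1`, the distribution `ρ` is symmetric about `-1/2`,
so pairing `n` with `-n-1` gives `∑ x ρ(x) = ∑_{n ≥ 0} (n - (n+1)) ρ(n) = -∑_{n ≥ 0} ρ(n) = -1/2`.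
The only analytic input is that the first moment converges: eventually `w(-z)/w(z)` is at most
`r = w(-1)/(w(-1)+c) < 1`, so the weights `∏_{z=1}^{n} w(-z)/w(z)` decay geometrically.
-/

open Asymptotics

lemma isBigO_geometric_of_ratio_le {E : Type*} [SeminormedAddCommGroup E] {a : ℕ → E} {r : ℝ}
    (hr : 0 < r)
    (h : ∀ᶠ n in atTop, ‖a (n + 1)‖ ≤ r * ‖a n‖) : a =O[atTop] (r ^ ·) := by
  obtain ⟨N, hN⟩ := eventually_atTop.mp h
  have hdecay : ∀ k, ‖a (N + k)‖ ≤ r ^ k * ‖a N‖ := by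
    intro k
    induction k with
    | zero => simp
    | succ k ih =>
      calc ‖a (N + (k + 1))‖ ≤ r * ‖a (N + k)‖ := hN (N + k) (Nat.le_add_right N k)
        _ ≤ r * (r ^ k * ‖a N‖) := by gcongr
        _ = r ^ (k + 1) * ‖a N‖ := by ring
  refine IsBigO.of_bound (‖a N‖ / r ^ N) ?_
  filter_upwards [eventually_ge_atTop N] with n hn
  obtain ⟨k, rfl⟩ := Nat.exists_eq_add_of_le hn
  rw [Real.norm_of_nonneg (pow_nonneg hr.le _), pow_add]
  calc ‖a (N + k)‖ ≤ r ^ k * ‖a N‖ := hdecay k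
    _ = ‖a N‖ / r ^ N * (r ^ N * r ^ k) := by field_simp

lemma summable_natCast_mul_of_ratio_le {a : ℕ → ℝ} {r : ℝ} (hr₀ : 0 < r) (hr₁ : r < 1)
    (h : ∀ᶠ n in atTop, ‖a (n + 1)‖ ≤ r * ‖a n‖) : Summable fun n : ℕ ↦ (n : ℝ) * a n := by
  have hgeom : Summable fun n : ℕ ↦ (n : ℝ) ^ 1 * r ^ n :=
    summable_pow_mul_geometric_of_norm_lt_one 1 (by rwa [Real.norm_of_nonneg hr₀.le])
  refine summable_of_isBigO_nat hgeom ?_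
  simpa only [pow_one] using (isBigO_refl (fun n : ℕ ↦ (n : ℝ)) atTop).mul
    (isBigO_geometric_of_ratio_le hr₀ h)

lemma hasSum_intCast_mul_of_apply_neg_add_one {f : ℤ → ℝ} (hsymm : ∀ x, f (-(x + 1)) = f x)
    {s : ℝ} (hf : HasSum (fun n : ℕ ↦ f n) s) (hmom : Summable fun n : ℕ ↦ (n : ℝ) * f n) :
    HasSum (fun x : ℤ ↦ (x : ℝ) * f x) (-s) := by
  set m := ∑' n : ℕ, (n : ℝ) * f n
  have hneg : HasSum (fun n : ℕ ↦ ((-(n + 1 : ℤ) : ℤ) : ℝ) * f (-(n + 1))) (-(m + s)) :=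
    (hmom.hasSum.add hf).neg.congr_fun fun n ↦ by
      rw [hsymm]
      push_cast
      ring
  have hpos : HasSum (fun n : ℕ ↦ ((n : ℤ) : ℝ) * f n) m := by
    simpa only [Int.cast_natCast] using hmom.hasSum
  have hall := HasSum.of_nat_of_neg_add_one (f := fun x : ℤ ↦ (x : ℝ) * f x) hpos hneg
  rwa [show m + -(m + s) = -s by ring] at hall

def weightProd (w : ℤ → ℝ) (n : ℕ) : ℝ := ∏ z ∈ Finset.Icc (1 : ℤ) n, w (-z) / w z

lemma weightProd_succ (w : ℤ → ℝ) (n : ℕ) :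
    weightProd w (n + 1) = w (-(n + 1)) / w (n + 1) * weightProd w n := by
  rw [weightProd, weightProd, Nat.cast_succ, ← Finset.insert_Icc_right_eq_Icc_add_one (by omega),
    Finset.prod_insert (by simp)]

lemma weightProd_pos {w : ℤ → ℝ} (hw : ∀ z, 0 < w z) (n : ℕ) : 0 < weightProd w n :=
  Finset.prod_pos fun _ _ ↦ div_pos (hw _) (hw _)

lemma Zconst_eq (w : ℤ → ℝ) : Zconst w = 2 * ∑' n, weightProd w n := rfl

lemma rho_natCast (w : ℤ → ℝ) (n : ℕ) : rho w n = (Zconst w)⁻¹ * weightProd w n := by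
  have hidx : |2 * (n : ℤ) + 1| / 2 = n := by
    rw [abs_of_nonneg (by positivity)]
    omega
  rw [rho, hidx, weightProd]

lemma rho_neg_add_one (w : ℤ → ℝ) (x : ℤ) : rho w (-(x + 1)) = rho w x := by
  rw [rho, rho, show 2 * -(x + 1) + 1 = -(2 * x + 1) by ring, abs_neg]

namespace GoodWeight

variable {w : ℤ → ℝ}

lemma exists_eventually_ratio_le (hw : GoodWeight w) :
    ∃ r, 0 < r ∧ r < 1 ∧ ∀ᶠ z : ℤ in atTop, w (-z) / w z ≤ r := by
  obtain ⟨hpos, hstep, c, hc, hev⟩ := hw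
  have hw₁ := hpos (-1)
  refine ⟨w (-1) / (w (-1) + c), by positivity, (div_lt_one (by positivity)).mpr (by linarith), ?_⟩
  filter_upwards [hev, eventually_ge_atTop 1] with z hgap hz
  have hmono : w (-z) ≤ w (-1) := monotone_int_of_le_succ hstep (by omega)
  have := hpos (-z)
  rw [div_le_div_iff₀ (hpos z) (by positivity)]
  nlinarith

lemma summable_weightProd_and_natCast_mul (hw : GoodWeight w) :
    Summable (weightProd w) ∧ Summable fun n : ℕ ↦ (n : ℝ) * weightProd w n := by
  obtain ⟨r, hr₀, hr₁, hratio⟩ := hw.exists_eventually_ratio_le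
  have hratioNat : ∀ᶠ n : ℕ in atTop, w (-(n + 1)) / w (n + 1) ≤ r := by
    simpa only [Function.comp_def, Nat.cast_succ] using
      (tendsto_natCast_atTop_atTop.comp (tendsto_add_atTop_nat 1)).eventually hratio
  have hstep : ∀ᶠ n in atTop, ‖weightProd w (n + 1)‖ ≤ r * ‖weightProd w n‖ := by
    filter_upwards [hratioNat] with n hn
    rw [weightProd_succ, norm_mul, Real.norm_of_nonneg (div_pos (hw.1 _) (hw.1 _)).le]
    gcongr
  exact ⟨summable_of_isBigO_nat (summable_geometric_of_lt_one hr₀.le hr₁)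
      (isBigO_geometric_of_ratio_le hr₀ hstep),
    summable_natCast_mul_of_ratio_le hr₀ hr₁ hstep⟩

lemma hasSum_rho_natCast (hw : GoodWeight w) : HasSum (fun n : ℕ ↦ rho w n) (1 / 2) := by
  obtain ⟨hsum, -⟩ := hw.summable_weightProd_and_natCast_mul
  have hS : 0 < ∑' n, weightProd w n :=
    hsum.tsum_pos (fun n ↦ (weightProd_pos hw.1 n).le) 0 (weightProd_pos hw.1 0)
  have htotal : (Zconst w)⁻¹ * ∑' n, weightProd w n = 1 / 2 := by
    rw [Zconst_eq]
    field_simp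
  exact htotal ▸ (hsum.hasSum.mul_left (Zconst w)⁻¹).congr_fun (rho_natCast w)

end GoodWeight

/-- the stationary distribution `ρ` has mean `-1/2`. -/
theorem stmt_4 (w : ℤ → ℝ) (hw : GoodWeight w) :
    HasSum (fun x : ℤ => (x : ℝ) * rho w x) (-(1 / 2)) := by
  obtain ⟨-, hmom⟩ := hw.summable_weightProd_and_natCast_mul
  refine hasSum_intCast_mul_of_apply_neg_add_one (rho_neg_add_one w) hw.hasSum_rho_natCast ?_
  simpa only [rho_natCast, mul_left_comm] using hmom.mul_left (Zconst w)⁻¹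
end
end

section
/- Assume additionally w(−1) < w(1). Let η be the Markov chain on ℤ with transition kernel P and let θ₊ := min{n ≥ 0 : η(n) ≥ 0}. Then there exists γ > 0 such that E[exp(γ·θ₊) | η(0) = −1] < ∞. -/
open MeasureTheory Filter
open scoped BigOperators ENNReal

noncomputable section

/-! Since `w` is nondecreasing, from a negative site the chain steps down with probability
`q x ≤ r := q (-1) < 1/2`. Hence for suitable `β > 1` the function `V y = β ^ (-y)`, killed on
`[0, ∞)`, satisfies a drift inequality `P V ≤ λ V` on the negative half-line with `λ < 1`.
Iterating it, the paths from `-1` that stay negative for `n` steps have total weight at most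
`λ ^ n β`, so `P(θ₊ > n)` decays geometrically and `exp (γ θ₊)` is integrable once
`e ^ γ λ < 1`. -/

namespace GoodWeight

variable {w : ℤ → ℝ} (hw : GoodWeight w)
include hw

lemma pos_add_neg (x : ℤ) : 0 < w x + w (-x) := add_pos (hw.1 x) (hw.1 (-x))

lemma pfun_nonneg (x : ℤ) : 0 ≤ pfun w x := div_nonneg (hw.1 (-x)).le (hw.pos_add_neg x).le

lemma qfun_pos (x : ℤ) : 0 < qfun w x := div_pos (hw.1 x) (hw.pos_add_neg x)

lemma pfun_add_qfun (x : ℤ) : pfun w x + qfun w x = 1 := by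
  rw [pfun, qfun, ← add_div, add_comm, div_self (hw.pos_add_neg x).ne']

lemma qfun_zero : qfun w 0 = 1 / 2 := by
  have := hw.1 0
  rw [qfun, neg_zero]
  field_simp
  ring

lemma qfun_le_qfun_neg_one {x : ℤ} (hx : x ≤ -1) : qfun w x ≤ qfun w (-1) := by
  have hmono : Monotone w := monotone_int_of_le_succ hw.2.1
  have h1 : w x ≤ w (-1) := hmono hx
  have h2 : w 1 ≤ w (-x) := hmono (by omega)
  rw [qfun, qfun, div_le_div_iff₀ (hw.pos_add_neg x) (hw.pos_add_neg (-1)), neg_neg]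
  nlinarith [mul_le_mul h1 h2 (hw.1 1).le (hw.1 (-1)).le]

lemma qfun_neg_one_lt_half (hw1 : w (-1) < w 1) : qfun w (-1) < 1 / 2 := by
  rw [qfun, neg_neg, div_lt_iff₀ (add_pos (hw.1 (-1)) (hw.1 1))]
  linarith

lemma Pker_nonneg (x y : ℤ) : 0 ≤ Pker w x y := by
  unfold Pker
  split_ifs
  · exact mul_nonneg (Finset.prod_nonneg fun z _ => hw.pfun_nonneg z) (hw.qfun_pos _).le
  · exact le_rfl

end GoodWeight

section Kernel

variable {w : ℤ → ℝ}

lemma Pker_sub_one (x : ℤ) : Pker w x (x - 1) = qfun w x := by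
  rw [Pker, if_pos le_rfl, Finset.Icc_eq_empty (by omega), Finset.prod_empty, one_mul,
    sub_add_cancel]

lemma Pker_eq_pfun_mul {x y : ℤ} (hxy : x ≤ y) : Pker w x y = pfun w x * Pker w (x + 1) y := by
  rw [Pker, Pker, if_pos (by omega), if_pos (by omega), ← Finset.mul_prod_Ioc_eq_prod_Icc hxy,
    mul_assoc, Finset.Icc_add_one_left_eq_Ioc]

lemma Pker_eq_zero {x y : ℤ} (h : y < x - 1) : Pker w x y = 0 := by
  rw [Pker, if_neg (by omega)]

end Kernel

/-- `negDrift w β = P V` for the Lyapunov function `V y = β ^ (-y)` killed on `[0, ∞)`;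
the sum starts at `x - 1` because `P` moves down by at most one step. -/
def negDrift (w : ℤ → ℝ) (β : ℝ) (x : ℤ) : ℝ :=
  ∑ y ∈ Finset.Icc (x - 1) (-1), Pker w x y * β ^ (-y)

section Drift

variable {w : ℤ → ℝ} {β : ℝ}

lemma negDrift_eq {x : ℤ} (hx : x ≤ -1) :
    negDrift w β x = qfun w x * β ^ (1 - x) + pfun w x * negDrift w β (x + 1) := by
  have hsplit : Finset.Icc (x - 1) (-1) = insert (x - 1) (Finset.Icc x (-1)) := by
    ext z
    simp only [Finset.mem_Icc, Finset.mem_insert]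
    omega
  rw [negDrift, hsplit, Finset.sum_insert (by simp), Pker_sub_one, neg_sub, negDrift,
    add_sub_cancel_right, Finset.mul_sum]
  congr 1
  refine Finset.sum_congr rfl fun y hy => ?_
  rw [Pker_eq_pfun_mul (Finset.mem_Icc.mp hy).1, mul_assoc]

lemma GoodWeight.negDrift_zero (hw : GoodWeight w) : negDrift w β 0 = β / 2 := by
  rw [negDrift, zero_sub, Finset.Icc_self, Finset.sum_singleton, ← zero_sub, Pker_sub_one,
    hw.qfun_zero, zero_sub, neg_neg, zpow_one]
  ring

lemma GoodWeight.negDrift_le (hw : GoodWeight w) {r lam : ℝ}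
    (hq : ∀ x ≤ -1, qfun w x ≤ r) (hβ : 1 < β) (hlam : lam < 1)
    (hbase : r * β + 1 / 2 ≤ lam) (hstep : r * β ^ 2 ≤ lam * (β - 1 + r)) :
    ∀ x ≤ -1, negDrift w β x ≤ lam * β ^ (-x) := by
  have hβ0 : 0 < β := by linarith
  refine Int.leInductionDown ?_ fun x hx ih => ?_
  · rw [negDrift_eq le_rfl, neg_add_cancel, hw.negDrift_zero, neg_neg, zpow_one,
      show (1 : ℤ) - -1 = 2 by norm_num, zpow_two]
    have hp := hw.pfun_add_qfun (-1)
    have hqβ := mul_le_mul_of_nonneg_right (hq (-1) le_rfl) (mul_self_nonneg β)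
    nlinarith [mul_le_mul_of_nonneg_left hbase hβ0.le, hw.qfun_pos (-1)]
  · have hp : pfun w (x - 1) = 1 - qfun w (x - 1) := eq_sub_of_add_eq (hw.pfun_add_qfun _)
    have hqr := hq (x - 1) (by omega)
    have hV : 0 < β ^ (-x) := zpow_pos hβ0 _
    rw [negDrift_eq (by omega), sub_add_cancel,
      show 1 - (x - 1) = 2 + -x by ring, show -(x - 1) = 1 + -x by ring,
      zpow_add₀ hβ0.ne', zpow_add₀ hβ0.ne', zpow_one, zpow_two]
    have hpF := mul_le_mul_of_nonneg_left ih (hw.pfun_nonneg (x - 1))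
    have hlamβ : 0 ≤ β * β - lam := by nlinarith
    have hqV := mul_le_mul_of_nonneg_right hqr (mul_nonneg hlamβ hV.le)
    rw [hp] at hpF ⊢
    nlinarith [mul_le_mul_of_nonneg_right hstep hV.le]

end Drift

lemma exists_drift_params {r : ℝ} (hr0 : 0 < r) (hr : r < 1 / 2) :
    ∃ β lam : ℝ, 1 < β ∧ 0 < lam ∧ lam < 1 ∧ r * β + 1 / 2 ≤ lam ∧
      r * β ^ 2 ≤ lam * (β - 1 + r) := by
  -- any `β ∈ (1, 1/(2r))` works; both bounds on `lam` are then `< 1`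
  set β := (2 * r + 1) / (4 * r)
  have hrβ : r * β = (2 * r + 1) / 4 := by simp only [β]; field_simp
  have hβ : 1 < β := by rw [lt_div_iff₀ (by positivity)]; linarith
  have hden : 0 < β - 1 + r := by linarith
  refine ⟨β, max (r * β ^ 2 / (β - 1 + r)) (r * β + 1 / 2), hβ,
    lt_max_of_lt_right (by positivity), max_lt ?_ (by linarith), le_max_right _ _,
    (div_le_iff₀ hden).1 (le_max_left _ _)⟩
  rw [div_lt_one hden]
  nlinarith

/-- The weight `K a y₀ * K y₀ y₁ * ⋯` of the path `a, y₀, …, y_{n-1}`. -/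
def pathWeight (K : ℤ → ℤ → ℝ) (a : ℤ) {n : ℕ} (y : Fin n → ℤ) : ℝ :=
  ∏ i : Fin n, K ((Fin.cons a y : Fin (n + 1) → ℤ) i.castSucc) (y i)

lemma pathWeight_cons (K : ℤ → ℤ → ℝ) (a b : ℤ) {n : ℕ} (y : Fin n → ℤ) :
    pathWeight K a (Fin.cons b y : Fin (n + 1) → ℤ) = K a b * pathWeight K b y := by
  simp [pathWeight, Fin.prod_univ_succ]

lemma ENNReal.tsum_fin_cons {α : Type*} {n : ℕ} (f : (Fin (n + 1) → α) → ℝ≥0∞) :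
    ∑' y, f y = ∑' (b : α) (y : Fin n → α), f (Fin.cons b y) := by
  rw [← ENNReal.tsum_prod, ← (Fin.consEquiv fun _ => α).tsum_eq]
  rfl

lemma GoodWeight.tsum_pathWeight_neg_le {w : ℤ → ℝ} (hw : GoodWeight w) {β lam : ℝ}
    (hβ : 1 ≤ β) (hlam : 0 ≤ lam) (hdrift : ∀ x ≤ -1, negDrift w β x ≤ lam * β ^ (-x))
    (n : ℕ) : ∀ a ≤ -1, ∑' y : Fin n → ℤ,
      (if ∀ i, y i < 0 then ENNReal.ofReal (pathWeight (Pker w) a y) else 0) ≤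
        ENNReal.ofReal (lam ^ n * β ^ (-a)) := by
  induction n with
  | zero =>
    intro a ha
    rw [tsum_fintype, Fintype.sum_unique]
    simp only [pathWeight, Finset.univ_eq_empty, Finset.prod_empty, IsEmpty.forall_iff,
      if_true, pow_zero, one_mul]
    exact ENNReal.ofReal_le_ofReal (one_le_zpow₀ hβ (by omega))
  | succ n ih =>
    intro a ha
    have hcons : ∀ (b : ℤ) (y : Fin n → ℤ),
        (if ∀ i, (Fin.cons b y : Fin (n + 1) → ℤ) i < 0 then
          ENNReal.ofReal (pathWeight (Pker w) a (Fin.cons b y : Fin (n + 1) → ℤ)) else 0) =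
        (if b < 0 then ENNReal.ofReal (Pker w a b) else 0) *
          (if ∀ i, y i < 0 then ENNReal.ofReal (pathWeight (Pker w) b y) else 0) := by
      intro b y
      simp only [Fin.forall_fin_succ, Fin.cons_zero, Fin.cons_succ, pathWeight_cons,
        ENNReal.ofReal_mul (hw.Pker_nonneg a b)]
      split_ifs <;> simp_all
    have hsupp : ∀ b ∉ Finset.Icc (a - 1) (-1),
        (if b < 0 then ENNReal.ofReal (Pker w a b) else 0) *
          ENNReal.ofReal (lam ^ n * β ^ (-b)) = 0 := by
      intro b hb
      rw [Finset.mem_Icc, not_and_or, not_le, not_le] at hb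
      rcases hb with hb | hb
      · rw [Pker_eq_zero hb]; simp
      · rw [if_neg (by omega), zero_mul]
    calc _ = ∑' (b : ℤ), (if b < 0 then ENNReal.ofReal (Pker w a b) else 0) *
          ∑' y : Fin n → ℤ, (if ∀ i, y i < 0 then
            ENNReal.ofReal (pathWeight (Pker w) b y) else 0) := by
          simp only [ENNReal.tsum_fin_cons, hcons, ENNReal.tsum_mul_left]
      _ ≤ ∑' (b : ℤ), (if b < 0 then ENNReal.ofReal (Pker w a b) else 0) *
          ENNReal.ofReal (lam ^ n * β ^ (-b)) := by
          refine ENNReal.tsum_le_tsum fun b => ?_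
          split_ifs with hb
          · exact mul_le_mul_right (ih b (by omega)) _
          · simp
      _ = ENNReal.ofReal (lam ^ n * negDrift w β a) := by
          rw [tsum_eq_sum hsupp, negDrift, Finset.mul_sum,
            ENNReal.ofReal_sum_of_nonneg fun b _ =>
              mul_nonneg (pow_nonneg hlam n) (mul_nonneg (hw.Pker_nonneg a b) (by positivity))]
          refine Finset.sum_congr rfl fun b hb => ?_
          rw [if_pos (by have := (Finset.mem_Icc.mp hb).2; omega),
            ← ENNReal.ofReal_mul (hw.Pker_nonneg a b)]
          ring_nf
      _ ≤ ENNReal.ofReal (lam ^ (n + 1) * β ^ (-a)) := by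
          refine ENNReal.ofReal_le_ofReal ?_
          rw [pow_succ, mul_assoc]
          exact mul_le_mul_of_nonneg_left (hdrift a ha) (pow_nonneg hlam n)

namespace KChain

variable {Ω : Type*} [MeasurableSpace Ω] {μ : Measure Ω} {K : ℤ → ℤ → ℝ} {η : ℕ → Ω → ℤ}
  {a : ℤ}

lemma ae_start (hη : KChain μ K η a) : ∀ᵐ ω ∂μ, η 0 ω = a := by
  have hcover : {ω | ¬η 0 ω = a} ⊆ ⋃ b : {b : ℤ // b ≠ a}, {ω | ∀ i ≤ 0, η i ω = b} := by
    intro ω hω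
    exact Set.mem_iUnion.2 ⟨⟨η 0 ω, hω⟩, fun i hi => by rw [Nat.le_zero.1 hi]⟩
  refine measure_mono_null hcover (measure_iUnion_null fun b => ?_)
  rw [hη.2 0 fun _ => b]
  simp [b.2]

lemma measure_forall_mem_le (hη : KChain μ K η a) (S : Set ℤ) [DecidablePred (· ∈ S)]
    (k : ℕ) :
    μ {ω | ∀ m ≤ k, η m ω ∈ S} ≤
      ∑' y : Fin k → ℤ, if ∀ i, y i ∈ S then ENNReal.ofReal (pathWeight K a y) else 0 := by
  -- the path `a, y`, extended constantly beyond time `k` to fit the cylinders of `KChain`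
  set path : (Fin k → ℤ) → ℕ → ℤ :=
    fun y i => (Fin.cons a y : Fin (k + 1) → ℤ) ⟨min i k, by omega⟩
  have hpath_castSucc :
      ∀ y (i : Fin k), path y i = (Fin.cons a y : Fin (k + 1) → ℤ) i.castSucc :=
    fun y i => congrArg (Fin.cons a y : Fin (k + 1) → ℤ) (Fin.ext (min_eq_left i.2.le))
  have hpath_succ : ∀ y (i : ℕ) (hi : i < k), path y (i + 1) = y ⟨i, hi⟩ := by
    intro y i hi
    rw [← Fin.cons_succ (α := fun _ => ℤ) a y]
    exact congrArg (Fin.cons a y : Fin (k + 1) → ℤ) (Fin.ext (min_eq_left hi))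
  have hcover : {ω | ∀ m ≤ k, η m ω ∈ S} ≤ᵐ[μ]
      (⋃ y : Fin k → ℤ, {ω | (∀ i, y i ∈ S) ∧ ∀ i ≤ k, η i ω = path y i} : Set Ω) := by
    filter_upwards [hη.ae_start] with ω h0 hω
    refine Set.mem_iUnion.2 ⟨fun i => η (i + 1) ω, fun i => hω _ (by omega), fun i hi => ?_⟩
    cases i with
    | zero => simp [path, h0]
    | succ i => rw [hpath_succ _ i (by omega)]
  refine (measure_mono_ae hcover).trans ((measure_iUnion_le _).trans
    (ENNReal.tsum_le_tsum fun y => ?_))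
  split_ifs with hy
  · refine (measure_mono fun ω hω => hω.2).trans (hη.2 k (path y)).le |>.trans_eq ?_
    rw [show path y 0 = a by simp [path], if_pos rfl, one_mul, pathWeight,
      ← Fin.prod_univ_eq_prod_range]
    simp only [hpath_castSucc, hpath_succ _ _ (Fin.is_lt _)]
  · simp [hy]

end KChain

lemma exists_exp_moment_lt_top_of_geometric_tail {Ω : Type*} [MeasurableSpace Ω]
    {μ : Measure Ω} {η : ℕ → Ω → ℤ} {C lam : ℝ} (hlam0 : 0 < lam) (hlam1 : lam < 1)
    (htail : ∀ n, μ {ω | ∀ m < n, η m ω < 0} ≤ ENNReal.ofReal (C * lam ^ n)) :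
    ∃ γ > (0 : ℝ),
      (∑' n : ℕ, ENNReal.ofReal (Real.exp (γ * n)) *
          μ {ω | 0 ≤ η n ω ∧ ∀ m < n, η m ω < 0}) +
        ⊤ * μ {ω | ∀ n, η n ω < 0} < ⊤ := by
  obtain ⟨γ, hγ, hρ1⟩ : ∃ γ > (0 : ℝ), Real.exp γ * lam < 1 := by
    have hlog := Real.log_neg hlam0 hlam1
    refine ⟨-Real.log lam / 2, by linarith, ?_⟩
    nth_rw 2 [← Real.exp_log hlam0]
    rw [← Real.exp_add, Real.exp_lt_one_iff]
    linarith
  set ρ := Real.exp γ * lam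
  have hρ0 : 0 ≤ ρ := by positivity
  have hnever : μ {ω | ∀ n, η n ω < 0} = 0 := by
    have hlim : Tendsto (fun n : ℕ => ENNReal.ofReal (C * lam ^ n)) atTop (nhds 0) := by
      simpa using ENNReal.tendsto_ofReal
        ((tendsto_pow_atTop_nhds_zero_of_lt_one hlam0.le hlam1).const_mul C)
    exact le_antisymm (ge_of_tendsto' hlim fun n =>
      (measure_mono (Set.ofPred_subset_ofPred.2 fun ω hω m _ => hω m)).trans (htail n)) bot_le
  have hterm : ∀ n : ℕ, ENNReal.ofReal (Real.exp (γ * n)) *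
      μ {ω | 0 ≤ η n ω ∧ ∀ m < n, η m ω < 0} ≤ ENNReal.ofReal (C * ρ ^ n) := by
    intro n
    calc _ ≤ ENNReal.ofReal (Real.exp (γ * n)) * ENNReal.ofReal (C * lam ^ n) :=
          mul_le_mul_right ((measure_mono fun ω hω => hω.2).trans (htail n)) _
      _ = ENNReal.ofReal (C * ρ ^ n) := by
          rw [← ENNReal.ofReal_mul (Real.exp_pos _).le, mul_comm γ, Real.exp_nat_mul, mul_pow]
          ring_nf
  refine ⟨γ, hγ, ?_⟩
  rw [hnever, mul_zero, add_zero]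
  exact (ENNReal.tsum_le_tsum hterm).trans_lt
    ((summable_geometric_of_lt_one hρ0 hρ1).mul_left C).tsum_ofReal_lt_top

/-- under the extra assumption `w(-1) < w(1)`, the hitting time
`θ₊ := min{n ≥ 0 : η(n) ≥ 0}` of the Markov chain `η` with kernel `P` started at `-1`
has a finite exponential moment. -/
theorem stmt_6 (w : ℤ → ℝ) (hw : GoodWeight w) (hw1 : w (-1) < w 1)
    {Ω : Type*} [MeasurableSpace Ω] (μ : Measure Ω) [IsProbabilityMeasure μ]
    (η : ℕ → Ω → ℤ) (hη : KChain μ (Pker w) η (-1)) :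
    ∃ γ > (0 : ℝ),
      (∑' n : ℕ, ENNReal.ofReal (Real.exp (γ * n)) *
          μ {ω | 0 ≤ η n ω ∧ ∀ m < n, η m ω < 0}) +
        ⊤ * μ {ω | ∀ n, η n ω < 0} < ⊤ := by
  obtain ⟨β, lam, hβ, hlam0, hlam1, hbase, hstep⟩ :=
    exists_drift_params (hw.qfun_pos (-1)) (hw.qfun_neg_one_lt_half hw1)
  have hdrift := hw.negDrift_le (fun x hx => hw.qfun_le_qfun_neg_one hx) hβ hlam1 hbase hstep
  refine exists_exp_moment_lt_top_of_geometric_tail (C := β / lam) hlam0 hlam1 fun n => ?_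
  cases n with
  | zero =>
    simp only [not_lt_zero, IsEmpty.forall_iff, implies_true, Set.ofPred_true, measure_univ,
      pow_zero, mul_one]
    rw [← ENNReal.ofReal_one]
    exact ENNReal.ofReal_le_ofReal ((one_le_div hlam0).2 (by linarith))
  | succ k =>
    calc μ {ω | ∀ m < k + 1, η m ω < 0} = μ {ω | ∀ m ≤ k, η m ω ∈ Set.Iio 0} := by
          simp only [Nat.lt_succ_iff, Set.mem_Iio]
      _ ≤ ENNReal.ofReal (lam ^ k * β ^ (-(-1 : ℤ))) :=
          (hη.measure_forall_mem_le _ k).trans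
            (hw.tsum_pathWeight_neg_le hβ.le hlam0.le hdrift k (-1) le_rfl)
      _ = ENNReal.ofReal (β / lam * lam ^ (k + 1)) := by
          rw [neg_neg, zpow_one, pow_succ]
          field_simp
end
end
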